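/- arXiv:1011.2167 — 5 statements merged into one kernel-verified Lean document; each statement's English description precedes it below -/
import Mathlib

section
/- Let R = k[x,y] and let F = R⁴ with square-zero R-linear endomorphism δ given by the matrix with rows (0, x, y, 1), (0, 0, 0, −y), (0, 0, 0, x), (0, 0, 0, 0). Then δ² = 0, H(F) := ker δ / im δ ≅ k, and the induced differential δ̄ on k ⊗_R F (reducing matrix entries mod (x,y)) has dim_k(ker δ̄ / im δ̄) = 2. -/
set_option synthInstance.maxHeartbeats 1000000

open LinearMap MvPolynomial

/-- The homology `ker δ / im δ` of a differential module. -/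
abbrev dHomology {R M : Type*} [CommRing R] [AddCommGroup M] [Module R M]
    (δ : M →ₗ[R] M) : Type _ :=
  LinearMap.ker δ ⧸ (LinearMap.range δ).comap (LinearMap.ker δ).subtype

/-!
`δ` is the Koszul complex `R ← R² ← R` of `(x, y)` folded into one module, with an extra
entry `1` from the top degree to the bottom one. As `y` is prime and does not divide `x`, a
cycle has no top component and its middle component is a Koszul boundary `(y w, -x w)`;
subtracting `δ (w e₃)` moves it into `R e₀`, so `H(F) = R e₀ / (x, y) e₀`. Modulo `(x, y)` only
the entry `1` survives, and the reduced homology is spanned by `e₁, e₂`.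
-/

namespace dHomology

variable {R M N : Type*} [CommRing R] [AddCommGroup M] [Module R M] [AddCommGroup N] [Module R N]
  (δ : M →ₗ[R] M) (φ : N →ₗ[R] M) (hφ : ∀ n, δ (φ n) = 0)

noncomputable def classMap : N →ₗ[R] dHomology δ :=
  ((range δ).comap (ker δ).subtype).mkQ ∘ₗ φ.codRestrict (ker δ) hφ

theorem classMap_eq_zero_iff (n : N) : classMap δ φ hφ n = 0 ↔ φ n ∈ range δ :=
  Submodule.Quotient.mk_eq_zero _

theorem classMap_surjective (h : ∀ v, δ v = 0 → ∃ n, v - φ n ∈ range δ) :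
    Function.Surjective (classMap δ φ hφ) := by
  intro z
  obtain ⟨⟨v, hv⟩, rfl⟩ := Submodule.Quotient.mk_surjective _ z
  obtain ⟨n, hn⟩ := h v hv
  refine ⟨n, (Submodule.Quotient.eq _).mpr ?_⟩
  show φ n - v ∈ range δ
  simpa using neg_mem hn

end dHomology

open dHomology

theorem koszul_exact_of_prime {R : Type*} [CommRing R] [IsDomain R] {x y : R}
    (hy : Prime y) (hyx : ¬ y ∣ x) (a b : R) (h : x * a + y * b = 0) :
    ∃ w, a = y * w ∧ b = -(x * w) := by
  obtain ⟨w, rfl⟩ : y ∣ a :=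
    ((hy.dvd_or_dvd ⟨-b, by linear_combination h⟩).resolve_left hyx)
  refine ⟨w, rfl, ?_⟩
  have : y * (b + x * w) = 0 := by linear_combination h
  linear_combination (mul_eq_zero.mp this).resolve_left hy.ne_zero

section FoldedKoszul

variable {R : Type*} [CommRing R]

def foldedKoszulMatrix (x y : R) : Matrix (Fin 4) (Fin 4) R :=
  !![0, x, y, 1;
     0, 0, 0, -y;
     0, 0, 0, x;
     0, 0, 0, 0]

theorem foldedKoszulMatrix_map {S : Type*} [CommRing S] (f : R →+* S) (x y : R) :
    (foldedKoszulMatrix x y).map f = foldedKoszulMatrix (f x) (f y) := by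
  ext i j
  fin_cases i <;> fin_cases j <;> simp [foldedKoszulMatrix]

theorem foldedKoszulMatrix_mul_self (x y : R) :
    foldedKoszulMatrix x y * foldedKoszulMatrix x y = 0 := by
  ext i j
  fin_cases i <;> fin_cases j <;>
    simp [foldedKoszulMatrix, Matrix.mul_apply, Fin.sum_univ_four, mul_comm]

theorem toLin'_foldedKoszulMatrix_apply (x y : R) (v : Fin 4 → R) :
    Matrix.toLin' (foldedKoszulMatrix x y) v =
      ![x * v 1 + y * v 2 + v 3, -(y * v 3), x * v 3, 0] := by
  ext i
  fin_cases i <;>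
    simp [foldedKoszulMatrix, Matrix.toLin'_apply, Matrix.mulVec, dotProduct, Fin.sum_univ_four]

noncomputable def dHomologyFoldedKoszulEquiv [IsDomain R] {x y : R} (hy : Prime y)
    (hyx : ¬ y ∣ x) :
    dHomology (Matrix.toLin' (foldedKoszulMatrix x y)) ≃ₗ[R] R ⧸ Ideal.span {x, y} := by
  set δ := Matrix.toLin' (foldedKoszulMatrix x y)
  have hδ : ∀ v, δ v = ![x * v 1 + y * v 2 + v 3, -(y * v 3), x * v 3, 0] :=
    toLin'_foldedKoszulMatrix_apply x y
  have hcycle : ∀ u, δ (LinearMap.single R (fun _ => R) 0 u) = 0 := by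
    intro u
    ext i
    fin_cases i <;> simp [hδ]
  have hsurj : Function.Surjective (classMap δ _ hcycle) := by
    refine classMap_surjective δ _ hcycle fun v hv => ?_
    have hv3 : v 3 = 0 := by simpa [hδ, hy.ne_zero] using congrFun hv 1
    obtain ⟨w, hw1, hw2⟩ :=
      koszul_exact_of_prime hy hyx (v 1) (v 2) (by simpa [hδ, hv3] using congrFun hv 0)
    refine ⟨v 0 + w, ![0, 0, 0, -w], ?_⟩
    ext i
    fin_cases i <;> simp [hδ, hv3, hw1, hw2]
  have hker : ker (classMap δ _ hcycle) = Ideal.span {x, y} := by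
    ext u
    rw [mem_ker, classMap_eq_zero_iff, Ideal.mem_span_pair]
    constructor
    · rintro ⟨v, hv⟩
      have hv3 : v 3 = 0 := by simpa [hδ, hy.ne_zero] using congrFun hv 1
      exact ⟨v 1, v 2, by simpa [hδ, hv3, mul_comm] using congrFun hv 0⟩
    · rintro ⟨a, b, rfl⟩
      refine ⟨![0, a, b, 0], ?_⟩
      ext i
      fin_cases i <;> simp [hδ, mul_comm]
  exact ((Submodule.quotEquivOfEq _ _ hker.symm).trans
    ((classMap δ _ hcycle).quotKerEquivOfSurjective hsurj)).symm

noncomputable def dHomologyFoldedKoszulZeroEquiv :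
    dHomology (Matrix.toLin' (foldedKoszulMatrix (0 : R) 0)) ≃ₗ[R] (Fin 2 → R) := by
  set δ := Matrix.toLin' (foldedKoszulMatrix (0 : R) 0)
  have hδ : ∀ v, δ v = ![v 3, 0, 0, 0] := fun v => by
    simpa [δ] using toLin'_foldedKoszulMatrix_apply (0 : R) 0 v
  set φ : (Fin 2 → R) →ₗ[R] (Fin 4 → R) := LinearMap.pi ![0, proj 0, proj 1, 0]
  have hφ : ∀ p, φ p = ![0, p 0, p 1, 0] := fun p => by
    ext i
    fin_cases i <;> rfl
  have hcycle : ∀ p, δ (φ p) = 0 := by simp [hδ, hφ]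
  have hinj : Function.Injective (classMap δ φ hcycle) := by
    refine (injective_iff_map_eq_zero _).mpr fun p hp => ?_
    obtain ⟨v, hv⟩ := (classMap_eq_zero_iff δ φ hcycle p).mp hp
    ext i
    fin_cases i
    · simpa [hδ, hφ] using (congrFun hv 1).symm
    · simpa [hδ, hφ] using (congrFun hv 2).symm
  have hsurj : Function.Surjective (classMap δ φ hcycle) := by
    refine classMap_surjective δ φ hcycle fun v hv => ⟨![v 1, v 2], ![0, 0, 0, v 0], ?_⟩
    have hv3 : v 3 = 0 := by simpa [hδ] using congrFun hv 0
    ext i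
    fin_cases i <;> simp [hδ, hφ, hv3]
  exact (LinearEquiv.ofBijective _ ⟨hinj, hsurj⟩).symm

end FoldedKoszul

theorem span_X_ne_top (k : Type*) [Field k] :
    Ideal.span {(X 0 : MvPolynomial (Fin 2) k), X 1} ≠ ⊤ := by
  refine ne_top_of_le_ne_top (RingHom.ker_ne_top (constantCoeff (σ := Fin 2) (R := k))) ?_
  rw [Ideal.span_le, Set.insert_subset_iff, Set.singleton_subset_iff]
  simp

/-- Over `R = k[x,y]`, the rank 4 free module `F = R⁴` with differential given by the matrix
`[[0, x, y, 1], [0,0,0,-y], [0,0,0,x], [0,0,0,0]]` satisfies `δ² = 0`,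
`H(F) ≅ k = R/(x,y)`, and the induced differential `δ̄` on `k ⊗_R F` (obtained by reducing the
matrix entries modulo `(x,y)`) has homology of `k`-dimension 2. -/
theorem example_scorpion
    (k : Type*) [Field k]
    (M : Matrix (Fin 4) (Fin 4) (MvPolynomial (Fin 2) k))
    (hM : M = !![0, X 0, X 1, 1;
                 0, 0,   0,   -(X 1);
                 0, 0,   0,   X 0;
                 0, 0,   0,   0])
    (δ : (Fin 4 → MvPolynomial (Fin 2) k) →ₗ[MvPolynomial (Fin 2) k]
         (Fin 4 → MvPolynomial (Fin 2) k))
    (hδ : δ = Matrix.toLin' M)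
    (m : Ideal (MvPolynomial (Fin 2) k))
    (hm : m = Ideal.span {(X 0 : MvPolynomial (Fin 2) k), X 1})
    (δbar : (Fin 4 → MvPolynomial (Fin 2) k ⧸ m) →ₗ[MvPolynomial (Fin 2) k ⧸ m]
            (Fin 4 → MvPolynomial (Fin 2) k ⧸ m))
    (hδbar : δbar = Matrix.toLin' (M.map (Ideal.Quotient.mk m))) :
    δ ∘ₗ δ = 0 ∧
    Nonempty (dHomology δ ≃ₗ[MvPolynomial (Fin 2) k] (MvPolynomial (Fin 2) k ⧸ m)) ∧
    Module.finrank (MvPolynomial (Fin 2) k ⧸ m) (dHomology δbar) = 2 := by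
  change M = foldedKoszulMatrix (X 0) (X 1) at hM
  subst hM hδ hm hδbar
  have hreduce :
      (foldedKoszulMatrix (X 0) (X 1)).map (Ideal.Quotient.mk (Ideal.span {X 0, X 1})) =
        foldedKoszulMatrix (0 : MvPolynomial (Fin 2) k ⧸ _) 0 := by
    rw [foldedKoszulMatrix_map]
    congr 1 <;> exact Ideal.Quotient.eq_zero_iff_mem.mpr (Ideal.subset_span (by simp))
  have := Ideal.Quotient.nontrivial_iff.mpr (span_X_ne_top k)
  have hyx : ¬ (X 1 : MvPolynomial (Fin 2) k) ∣ X 0 := by simp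
  refine ⟨?_, ⟨dHomologyFoldedKoszulEquiv X_prime hyx⟩, ?_⟩
  · rw [← Matrix.toLin'_mul, foldedKoszulMatrix_mul_self, map_zero]
  · rw [hreduce, dHomologyFoldedKoszulZeroEquiv.finrank_eq, Module.finrank_fin_fun]
end

section
/- Let R = k[x,y] and let D = R² with R-linear endomorphism δ given by the matrix [[xy, −y²],[x², −xy]]. Then δ² = 0 and H(D) = ker δ / im δ ≅ k. -/
set_option synthInstance.maxHeartbeats 1000000

open LinearMap MvPolynomial

/-!
The matrix is the rank-one product `(y, x)ᵀ · (x, -y)`, so `δ v = (x v₀ - y v₁) • (y, x)`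
and `δ² = 0` because `(x, -y) · (y, x)ᵀ = 0`. Since `y` is a nonzerodivisor and `x` is a
nonzerodivisor modulo `y`, the kernel is the free module `R · (y, x)`, while the image is
`(x, y) · (y, x)`. Hence `H(D) ≅ R / (x, y) = k`.
-/

section Homology

variable {R M N : Type*} [CommRing R] [AddCommGroup M] [Module R M] [AddCommGroup N] [Module R N]

noncomputable def dHomologyEquivQuotient (δ : M →ₗ[R] M) (ψ : N →ₗ[R] M)
    (hψ : Function.Injective ψ) (hker : range ψ = ker δ) (P : Submodule R N)
    (hrange : P.map ψ = range δ) : dHomology δ ≃ₗ[R] N ⧸ P :=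
  (Submodule.Quotient.equiv P _ ((LinearEquiv.ofInjective ψ hψ).trans (.ofEq _ _ hker))
    (by
      ext ⟨x, hx⟩
      simp only [Submodule.mem_map, Submodule.mem_comap, Submodule.subtype_apply, ← hrange]
      constructor
      · rintro ⟨p, hp, hpx⟩
        exact ⟨p, hp, congrArg Subtype.val hpx⟩
      · rintro ⟨p, hp, hpx⟩
        exact ⟨p, hp, Subtype.ext hpx⟩)).symm

end Homology

theorem toSpanSingleton_injective_of_isLeftRegular {R ι : Type*} [CommRing R] (x : ι → R)
    (i : ι) (hx : IsLeftRegular (x i)) : Function.Injective (toSpanSingleton R (ι → R) x) := by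
  intro s t hst
  have hi := congrFun hst i
  simp only [toSpanSingleton_apply, Pi.smul_apply, smul_eq_mul] at hi
  exact hx.right_of_commute (Commute.all _) hi

section RankOne

variable {R : Type*} [CommRing R] (a b : R)

abbrev rankOneNilpotent : Matrix (Fin 2) (Fin 2) R :=
  !![a * b, -(b * b); a * a, -(a * b)]

theorem toLin'_rankOneNilpotent_apply (v : Fin 2 → R) :
    Matrix.toLin' (rankOneNilpotent a b) v = (a * v 0 - b * v 1) • ![b, a] := by
  ext i
  fin_cases i <;> simp [Matrix.mulVec, dotProduct, Fin.sum_univ_two] <;> ring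

theorem toLin'_rankOneNilpotent_comp_self :
    Matrix.toLin' (rankOneNilpotent a b) ∘ₗ Matrix.toLin' (rankOneNilpotent a b) = 0 := by
  refine LinearMap.ext fun v => ?_
  rw [comp_apply, toLin'_rankOneNilpotent_apply, toLin'_rankOneNilpotent_apply]
  ext i
  fin_cases i <;> simp <;> ring

theorem range_toLin'_rankOneNilpotent :
    range (Matrix.toLin' (rankOneNilpotent a b)) =
      Submodule.map (toSpanSingleton R _ ![b, a]) (Ideal.span {a, b}) := by
  ext w
  simp only [mem_range, Submodule.mem_map, Ideal.mem_span_pair, toSpanSingleton_apply,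
    toLin'_rankOneNilpotent_apply]
  constructor
  · rintro ⟨v, rfl⟩
    exact ⟨_, ⟨v 0, -v 1, by ring⟩, rfl⟩
  · rintro ⟨t, ⟨c, d, rfl⟩, rfl⟩
    exact ⟨![c, -d], by simp [mul_comm]⟩

variable {a b}

theorem ker_toLin'_rankOneNilpotent (hb : IsLeftRegular b) (hab : ∀ r, b ∣ a * r → b ∣ r) :
    ker (Matrix.toLin' (rankOneNilpotent a b)) = range (toSpanSingleton R _ ![b, a]) := by
  ext v
  simp only [mem_ker, mem_range, toSpanSingleton_apply, toLin'_rankOneNilpotent_apply]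
  constructor
  · intro hv
    have hrel : a * v 0 = b * v 1 := by
      have h0 := congrFun hv 0
      simp only [Pi.smul_apply, Matrix.cons_val_zero, smul_eq_mul, Pi.zero_apply] at h0
      exact sub_eq_zero.mp (hb (show b * _ = b * 0 by rw [mul_comm, h0, mul_zero]))
    obtain ⟨t, ht⟩ := hab (v 0) ⟨v 1, hrel⟩
    have hv₁ : v 1 = a * t := hb (show b * v 1 = b * (a * t) by rw [← hrel, ht]; ring)
    exact ⟨t, by ext i; fin_cases i <;> simp [ht, hv₁, mul_comm]⟩
  · rintro ⟨t, rfl⟩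
    ext i
    fin_cases i <;> simp <;> ring

end RankOne

/-- Over `R = k[x,y]`, the rank 2 free module `D = R²` with differential given by the matrix
`[[xy, -y²], [x², -xy]]` satisfies `δ² = 0` and `H(D) = ker δ / im δ ≅ k = R/(x,y)`. -/
theorem example_minimized_scorpion
    (k : Type*) [Field k]
    (δ : (Fin 2 → MvPolynomial (Fin 2) k) →ₗ[MvPolynomial (Fin 2) k]
         (Fin 2 → MvPolynomial (Fin 2) k))
    (hδ : δ = Matrix.toLin'
      !![X 0 * X 1,  -(X 1 * X 1);
         X 0 * X 0,  -(X 0 * X 1)]) :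
    δ ∘ₗ δ = 0 ∧
    Nonempty (dHomology δ ≃ₗ[MvPolynomial (Fin 2) k]
      (MvPolynomial (Fin 2) k ⧸
        Ideal.span {(X 0 : MvPolynomial (Fin 2) k), X 1})) := by
  have hy : IsLeftRegular (X 1 : MvPolynomial (Fin 2) k) :=
    (IsRegular.of_ne_zero (X_ne_zero 1)).left
  have hxy (r : MvPolynomial (Fin 2) k) (h : X 1 ∣ X 0 * r) : X 1 ∣ r :=
    (X_prime.dvd_or_dvd h).resolve_left (by simp)
  subst hδ
  exact ⟨toLin'_rankOneNilpotent_comp_self _ _,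
    ⟨dHomologyEquivQuotient _ _ (toSpanSingleton_injective_of_isLeftRegular ![X 1, X 0] 0 hy)
      (ker_toLin'_rankOneNilpotent hy hxy).symm _ (range_toLin'_rankOneNilpotent _ _).symm⟩⟩
end

section
/- Let S be a commutative ring and let λ be a superadditive, nonnegative, ordered-monoid-valued function on a class of S-modules closed under submodules and quotients. Suppose given S-module maps ι : A → B, ε : B → C with ε ∘ ι = 0, a surjection ψ_A : A ↠ A'', an injection ι'' : A'' → B'' and ψ_B : B → B'' with ψ_B ∘ ι = ι'' ∘ ψ_A, and an injection φ_C : C' → C, surjection ε' : B' ↠ C', φ_B : B' → B with ε ∘ φ_B = φ_C ∘ ε'. Then λ(B) ≥ λ(im ι'') + λ(im ε'). -/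
/-!
Splitting `B` along `0 → im ι → B → B ⧸ im ι → 0` gives `λ(im ι) + λ(B ⧸ im ι) ≤ λ(B)`, and
superadditivity together with `λ ≥ 0` makes `λ` monotone along injections and surjections. Now
`ψB` maps `im ι` onto `im ι''` (as `ψA` is onto), and `φC` embeds `im ε'` into `im ε`, which is a
quotient of `B ⧸ im ι` because `ε ∘ ι = 0`.
-/

open LinearMap

section

variable {S μ : Type*} [Ring S] [AddCommMonoid μ] [PartialOrder μ]

def Superadditive (L : ∀ (M : Type) [AddCommGroup M] [Module S M], μ) : Prop :=
  ∀ (A B C : Type) [AddCommGroup A] [Module S A] [AddCommGroup B] [Module S B]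
    [AddCommGroup C] [Module S C] (f : A →ₗ[S] B) (g : B →ₗ[S] C),
    Function.Injective f → Function.Exact f g → Function.Surjective g → L A + L C ≤ L B

namespace Superadditive

variable {L : ∀ (M : Type) [AddCommGroup M] [Module S M], μ} (hL : Superadditive L)
  {M N : Type} [AddCommGroup M] [Module S M] [AddCommGroup N] [Module S N]
include hL

theorem add_quotient_le (p : Submodule S M) : L p + L (M ⧸ p) ≤ L M :=
  hL _ _ _ p.subtype p.mkQ p.injective_subtype (exact_subtype_mkQ p) p.mkQ_surjective

variable [IsOrderedAddMonoid μ] (hnonneg : ∀ (M : Type) [AddCommGroup M] [Module S M], 0 ≤ L M)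
include hnonneg

theorem le_of_injective (f : M →ₗ[S] N) (hf : Function.Injective f) : L M ≤ L N :=
  calc L M ≤ L M + L (N ⧸ range f) := le_add_of_nonneg_right (hnonneg _)
    _ ≤ L N := hL _ _ _ f (range f).mkQ hf (exact_map_mkQ_range f) (range f).mkQ_surjective

theorem le_of_surjective (g : M →ₗ[S] N) (hg : Function.Surjective g) : L N ≤ L M :=
  calc L N ≤ L (ker g) + L N := le_add_of_nonneg_left (hnonneg _)
    _ ≤ L M := hL _ _ _ (ker g).subtype g (ker g).injective_subtype (exact_subtype_ker_map g) hg

theorem map_le (f : M →ₗ[S] N) (p : Submodule S M) : L (p.map f) ≤ L p :=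
  hL.le_of_surjective hnonneg (f.submoduleMap p) (f.submoduleMap_surjective p)

theorem le_of_map_le {f : M →ₗ[S] N} (hf : Function.Injective f) {p : Submodule S M}
    {q : Submodule S N} (hpq : p.map f ≤ q) : L p ≤ L q :=
  hL.le_of_injective hnonneg ((Submodule.inclusion hpq).comp (p.equivMapOfInjective f hf).toLinearMap)
    ((Submodule.inclusion_injective hpq).comp (LinearEquiv.injective _))

theorem range_le_quotient {f : M →ₗ[S] N} {p : Submodule S M} (hp : p ≤ ker f) :
    L (range f) ≤ L (M ⧸ p) :=
  calc L (range f) ≤ L (M ⧸ ker f) :=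
        hL.le_of_surjective hnonneg f.quotKerEquivRange.toLinearMap f.quotKerEquivRange.surjective
    _ ≤ L (M ⧸ p) := hL.le_of_surjective hnonneg _ (Submodule.factor_surjective hp)

end Superadditive

end

theorem rank_lemma_general
    (S : Type*) [CommRing S] (μ : Type*) [AddCommMonoid μ] [PartialOrder μ] [IsOrderedAddMonoid μ]
    (L : ∀ (M : Type) [AddCommGroup M] [Module S M], μ)
    (hnonneg : ∀ (M : Type) [AddCommGroup M] [Module S M], 0 ≤ L M)
    (hsuper : ∀ (A B C : Type) [AddCommGroup A] [Module S A] [AddCommGroup B] [Module S B]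
      [AddCommGroup C] [Module S C] (f : A →ₗ[S] B) (g : B →ₗ[S] C),
      Function.Injective f → Function.Exact f g → Function.Surjective g →
        L A + L C ≤ L B)
    (A B C A'' B'' B' C' : Type)
    [AddCommGroup A] [Module S A] [AddCommGroup B] [Module S B] [AddCommGroup C] [Module S C]
    [AddCommGroup A''] [Module S A''] [AddCommGroup B''] [Module S B'']
    [AddCommGroup B'] [Module S B'] [AddCommGroup C'] [Module S C']
    (ι : A →ₗ[S] B) (ε : B →ₗ[S] C) (hcomp : ε ∘ₗ ι = 0)
    (ψA : A →ₗ[S] A'') (hψA : Function.Surjective ψA)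
    (ι'' : A'' →ₗ[S] B'')
    (ψB : B →ₗ[S] B'') (hsq1 : ψB ∘ₗ ι = ι'' ∘ₗ ψA)
    (φC : C' →ₗ[S] C) (hφC : Function.Injective φC)
    (ε' : B' →ₗ[S] C')
    (φB : B' →ₗ[S] B) (hsq2 : ε ∘ₗ φB = φC ∘ₗ ε') :
    L (LinearMap.range ι'') + L (LinearMap.range ε') ≤ L B := by
  have hL : Superadditive L := hsuper
  have range_ι'' : range ι'' = (range ι).map ψB := by
    rw [← range_comp, hsq1, range_comp_of_range_eq_top _ (range_eq_top.2 hψA)]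
  have range_ε'_map : (range ε').map φC ≤ range ε := by
    rw [← range_comp, ← hsq2]
    exact range_comp_le_range φB ε
  have range_ι_le_ker : range ι ≤ ker ε := range_le_ker_iff.2 hcomp
  calc L (range ι'') + L (range ε') ≤ L (range ι) + L (B ⧸ range ι) := by
        gcongr
        · exact range_ι'' ▸ hL.map_le hnonneg ψB (range ι)
        · exact (hL.le_of_map_le hnonneg hφC range_ε'_map).trans
            (hL.range_le_quotient hnonneg range_ι_le_ker)
    _ ≤ L B := hL.add_quotient_le (range ι)

/-- Santoni's rank lemma: let `λ` (here `L`) be a superadditive, nonnegative function on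
`S`-modules with values in an ordered commutative monoid. Given `ι : A → B`, `ε : B → C` with
`ε ∘ ι = 0`, a surjection `ψA : A ↠ A''`, injection `ι'' : A'' ↪ B''` and `ψB : B → B''` with
`ψB ∘ ι = ι'' ∘ ψA`, and an injection `φC : C' ↪ C`, surjection `ε' : B' ↠ C'`, `φB : B' → B`
with `ε ∘ φB = φC ∘ ε'`, one has `λ(B) ≥ λ(im ι'') + λ(im ε')`. -/
theorem rank_lemma
    (S : Type*) [CommRing S] (μ : Type*) [AddCommMonoid μ] [PartialOrder μ] [IsOrderedAddMonoid μ]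
    (L : ∀ (M : Type) [AddCommGroup M] [Module S M], μ)
    (hnonneg : ∀ (M : Type) [AddCommGroup M] [Module S M], 0 ≤ L M)
    (hsuper : ∀ (A B C : Type) [AddCommGroup A] [Module S A] [AddCommGroup B] [Module S B]
      [AddCommGroup C] [Module S C] (f : A →ₗ[S] B) (g : B →ₗ[S] C),
      Function.Injective f → Function.Exact f g → Function.Surjective g →
        L A + L C ≤ L B)
    (A B C A'' B'' B' C' : Type)
    [AddCommGroup A] [Module S A] [AddCommGroup B] [Module S B] [AddCommGroup C] [Module S C]
    [AddCommGroup A''] [Module S A''] [AddCommGroup B''] [Module S B'']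
    [AddCommGroup B'] [Module S B'] [AddCommGroup C'] [Module S C']
    (ι : A →ₗ[S] B) (ε : B →ₗ[S] C) (hcomp : ε ∘ₗ ι = 0)
    (ψA : A →ₗ[S] A'') (hψA : Function.Surjective ψA)
    (ι'' : A'' →ₗ[S] B'') (hι'' : Function.Injective ι'')
    (ψB : B →ₗ[S] B'') (hsq1 : ψB ∘ₗ ι = ι'' ∘ₗ ψA)
    (φC : C' →ₗ[S] C) (hφC : Function.Injective φC)
    (ε' : B' →ₗ[S] C') (hε' : Function.Surjective ε')
    (φB : B' →ₗ[S] B) (hsq2 : ε ∘ₗ φB = φC ∘ₗ ε') :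
    L (LinearMap.range ι'') + L (LinearMap.range ε') ≤ L B :=
  rank_lemma_general S μ L hnonneg hsuper A B C A'' B'' B' C' ι ε hcomp ψA hψA ι'' ψB hsq1 φC hφC ε'
    φB hsq2
end

section
/- Let R = k[x₁,…,x_d] be the ℤᵈ-graded polynomial ring and F a finitely generated ℤᵈ-graded free R-module with a graded square-zero R-linear endomorphism δ whose degree is ≤ 0 in every coordinate of ℤᵈ. Then F admits a free flag: a filtration 0 = F^{−1} ⊆ F^0 ⊆ F^1 ⊆ ⋯ of R-submodules with δ(F^n) ⊆ F^{n−1}, ∪ F^n = F, and each F^n/F^{n−1} free over R. -/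
/-!
Induct on the rank. The matrix entries `M i j` of `δ` in the homogeneous basis are monomials of
degree `deg j + dd - deg i`, so `M i j ≠ 0` forces `deg i ≤ deg j`, with equality only when
`M i j` is a constant. If some entry `M i j` has a nonzero constant term, `v = δ (b j)` is a cycle
whose `i`-th coordinate is a unit; otherwise `δ` kills a basis vector `v = b j` of minimal degree.
Either way `R ∙ v ≅ R`, the quotient `F ⧸ R ∙ v` is free on the remaining basis vectors, its
induced differential is again homogeneous of degree `dd`, and a free flag of the quotient pulls
back to one of `F` whose first step is `R ∙ v`.
-/

set_option synthInstance.maxHeartbeats 1000000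

open LinearMap MvPolynomial

/-- `p` is a homogeneous element of `k[x₁,…,x_d]` of multidegree `e ∈ ℤᵈ`:
it is zero, or a scalar multiple of the monomial with exponent vector `e`. -/
def IsHomogeneousOfDeg {k : Type*} [Field k] {d : ℕ}
    (p : MvPolynomial (Fin d) k) (e : Fin d → ℤ) : Prop :=
  p = 0 ∨ ∃ (c : k) (mo : Fin d →₀ ℕ), (∀ l, (mo l : ℤ) = e l) ∧ p = monomial mo c

section FreeFlag

variable {R F G : Type*} [CommRing R] [AddCommGroup F] [Module R F] [AddCommGroup G] [Module R G]

def HasFreeFlag (δ : F →ₗ[R] F) : Prop :=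
  ∃ Fl : ℕ → Submodule R F,
    Monotone Fl ∧
    Submodule.map δ (Fl 0) = ⊥ ∧
    (∀ n, Submodule.map δ (Fl (n+1)) ≤ Fl n) ∧
    (⨆ n, Fl n) = ⊤ ∧
    Module.Free R (Fl 0) ∧
    ∀ n, Module.Free R ((Fl (n+1)) ⧸ (Submodule.comap (Fl (n+1)).subtype (Fl n)))

theorem hasFreeFlag_of_subsingleton [Subsingleton F] (δ : F →ₗ[R] F) : HasFreeFlag δ :=
  ⟨fun _ => ⊥, monotone_const, Submodule.map_bot δ, fun _ => (Submodule.map_bot δ).le,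
    Subsingleton.elim _ _, Module.Free.of_subsingleton _ _,
    fun _ => Module.Free.of_subsingleton _ _⟩

noncomputable def Submodule.comapSubquotientEquiv (q : F →ₗ[R] G) (hq : Function.Surjective q)
    (A B : Submodule R G) :
    (B.comap q ⧸ (A.comap q).comap (B.comap q).subtype) ≃ₗ[R] (B ⧸ A.comap B.subtype) :=
  let r : B.comap q →ₗ[R] B ⧸ A.comap B.subtype :=
    (A.comap B.subtype).mkQ ∘ₗ q.restrict fun _ hx => hx
  have hr : Function.Surjective r := by
    intro z
    obtain ⟨⟨y, hy⟩, rfl⟩ := Submodule.mkQ_surjective _ z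
    obtain ⟨x, rfl⟩ := hq y
    exact ⟨⟨x, hy⟩, rfl⟩
  have hker : ker r = (A.comap q).comap (B.comap q).subtype := by
    ext x
    simp [r]
  (Submodule.quotEquivOfEq _ _ hker.symm).trans (r.quotKerEquivOfSurjective hr)

theorem HasFreeFlag.of_surjective (q : F →ₗ[R] G) (hq : Function.Surjective q)
    [Module.Free R (ker q)] {δ : F →ₗ[R] F} {δG : G →ₗ[R] G} (hker : ker q ≤ ker δ)
    (hcomm : q ∘ₗ δ = δG ∘ₗ q) (h : HasFreeFlag δG) : HasFreeFlag δ := by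
  obtain ⟨Fl, hmono, h0, hstep, htop, hfree0, hfree⟩ := h
  let Fl' : ℕ → Submodule R G := fun | 0 => ⊥ | n + 1 => Fl n
  have hmono' : Monotone Fl' := monotone_nat_of_le_succ fun
    | 0 => bot_le
    | n + 1 => hmono n.le_succ
  have hstep' : ∀ n, (Fl' (n + 1)).map δG ≤ Fl' n := fun
    | 0 => h0.le
    | n + 1 => hstep n
  have hfree' : ∀ n, Module.Free R (Fl' (n + 1) ⧸ (Fl' n).comap (Fl' (n + 1)).subtype) := fun
    | 0 => by
      have : (⊥ : Submodule R G).comap (Fl 0).subtype = ⊥ := by simp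
      exact Module.Free.of_equiv (Submodule.quotEquivOfEqBot _ this).symm
    | n + 1 => hfree n
  refine ⟨fun n => (Fl' n).comap q, fun m n hmn => Submodule.comap_mono (hmono' hmn),
    eq_bot_iff.2 (Submodule.map_le_iff_le_comap.2 hker), fun n => ?_, ?_,
    ‹Module.Free R (ker q)›,
    fun n => Module.Free.of_equiv (Submodule.comapSubquotientEquiv q hq _ _).symm⟩
  · refine Submodule.map_le_iff_le_comap.2 fun x hx => ?_
    change q (δ x) ∈ Fl' n
    rw [← comp_apply, hcomm, comp_apply]
    exact hstep' n (Submodule.mem_map_of_mem hx)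
  · refine eq_top_iff.2 fun x _ => ?_
    have hx : q x ∈ ⨆ n, Fl n := htop ▸ Submodule.mem_top
    obtain ⟨n, hn⟩ := (Submodule.mem_iSup_of_directed Fl hmono.directed_le).1 hx
    exact Submodule.mem_iSup_of_mem (n + 1) hn

end FreeFlag

namespace Module.Basis

variable {R F ι : Type*} [CommRing R] [AddCommGroup F] [Module R F] (b : Basis ι R F)

noncomputable def quotSpanSingletonCoord (v : F) (i₀ : ι) (u : R) :
    F →ₗ[R] {i // i ≠ i₀} →₀ R :=
  Finsupp.lcomapDomain Subtype.val Subtype.val_injective ∘ₗ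
    (b.repr.toLinearMap - (u • b.coord i₀).smulRight (b.repr v))

variable {b} {v : F} {i₀ : ι} {u : R}

theorem quotSpanSingletonCoord_apply (x : F) (i : {i // i ≠ i₀}) :
    b.quotSpanSingletonCoord v i₀ u x i = b.repr x i - u * b.repr x i₀ * b.repr v i := by
  simp [quotSpanSingletonCoord, mul_assoc]

theorem quotSpanSingletonCoord_surjective :
    Function.Surjective (b.quotSpanSingletonCoord v i₀ u) := by
  intro g
  refine ⟨b.repr.symm (g.mapDomain Subtype.val), Finsupp.ext fun i => ?_⟩
  have hi₀ : g.mapDomain Subtype.val i₀ = 0 :=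
    Finsupp.mapDomain_of_notMem_range _ _ fun ⟨j, hj⟩ => j.2 hj
  rw [quotSpanSingletonCoord_apply, repr_symm_apply, b.repr_linearCombination, hi₀,
    Finsupp.mapDomain_apply Subtype.val_injective]
  ring

theorem ker_quotSpanSingletonCoord (hu : u * b.repr v i₀ = 1) :
    ker (b.quotSpanSingletonCoord v i₀ u) = R ∙ v := by
  ext x
  rw [mem_ker, Submodule.mem_span_singleton]
  constructor
  · intro hx
    refine ⟨u * b.repr x i₀, b.repr.injective (Finsupp.ext fun i => ?_)⟩
    by_cases hi : i = i₀
    · rw [hi]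
      simp only [map_smul, Finsupp.smul_apply, smul_eq_mul]
      linear_combination (b.repr x i₀) * hu
    · have := congrArg (· ⟨i, hi⟩) hx
      simp only [quotSpanSingletonCoord_apply, Finsupp.coe_zero, Pi.zero_apply, sub_eq_zero] at this
      simp [this]
  · rintro ⟨r, rfl⟩
    ext i
    simp [quotSpanSingletonCoord_apply, hu]

noncomputable def quotSpanSingleton (hu : u * b.repr v i₀ = 1) :
    Basis {i // i ≠ i₀} R (F ⧸ R ∙ v) :=
  .ofRepr <| (Submodule.quotEquivOfEq _ _ (ker_quotSpanSingletonCoord hu).symm).trans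
    ((b.quotSpanSingletonCoord v i₀ u).quotKerEquivOfSurjective quotSpanSingletonCoord_surjective)

theorem quotSpanSingleton_repr_mk (hu : u * b.repr v i₀ = 1) (x : F) (i : {i // i ≠ i₀}) :
    (b.quotSpanSingleton hu).repr (Submodule.Quotient.mk x) i =
      b.repr x i - u * b.repr x i₀ * b.repr v i :=
  quotSpanSingletonCoord_apply x i

theorem free_span_singleton (hu : u * b.repr v i₀ = 1) : Module.Free R (R ∙ v) := by
  have hinj : Function.Injective (toSpanSingleton R F v) := fun r s hrs => by
    have := congrArg (fun x => u * b.repr x i₀) hrs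
    simp only [toSpanSingleton_apply, map_smul, Finsupp.smul_apply, smul_eq_mul] at this
    linear_combination (s - r) * hu + this
  exact Module.Free.of_equiv ((LinearEquiv.ofInjective _ hinj).trans
    (LinearEquiv.ofEq _ _ (span_singleton_eq_range R F v).symm))

theorem quotSpanSingleton_apply (hu : u * b.repr v i₀ = 1) (i : {i // i ≠ i₀}) :
    b.quotSpanSingleton hu i = Submodule.Quotient.mk (b i) := by
  refine ((b.quotSpanSingleton hu).repr.injective (Finsupp.ext fun j => ?_)).symm
  rw [quotSpanSingleton_repr_mk, repr_self, repr_self, Finsupp.single_eq_of_ne i.2.symm,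
    Finsupp.single_apply_left Subtype.val_injective]
  ring

end Module.Basis

theorem HasFreeFlag.of_quotient_span_singleton {R F ι : Type*} [CommRing R] [AddCommGroup F]
    [Module R F] (b : Module.Basis ι R F) {v : F} {i₀ : ι} {u : R} (hu : u * b.repr v i₀ = 1)
    {δ : F →ₗ[R] F} (hv : δ v = 0) {δ' : (F ⧸ R ∙ v) →ₗ[R] F ⧸ R ∙ v}
    (hcomm : (R ∙ v).mkQ ∘ₗ δ = δ' ∘ₗ (R ∙ v).mkQ) (h : HasFreeFlag δ') : HasFreeFlag δ := by
  have : Module.Free R (ker (R ∙ v).mkQ) := by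
    rw [Submodule.ker_mkQ]
    exact b.free_span_singleton hu
  refine HasFreeFlag.of_surjective _ (R ∙ v).mkQ_surjective ?_ hcomm h
  rw [Submodule.ker_mkQ, Submodule.span_singleton_le_iff_mem]
  exact hv

theorem isHomogeneousOfDeg_C {k : Type*} [Field k] {d : ℕ} (c : k) :
    IsHomogeneousOfDeg (C c : MvPolynomial (Fin d) k) 0 :=
  .inr ⟨c, 0, by simp, C_apply⟩

namespace IsHomogeneousOfDeg

variable {k : Type*} [Field k] {d : ℕ} {p q : MvPolynomial (Fin d) k} {e e' : Fin d → ℤ}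

theorem sub (hp : IsHomogeneousOfDeg p e) (hq : IsHomogeneousOfDeg q e) :
    IsHomogeneousOfDeg (p - q) e := by
  rcases hq with rfl | ⟨c', mo', hmo', rfl⟩
  · simpa using hp
  rcases hp with rfl | ⟨c, mo, hmo, rfl⟩
  · exact .inr ⟨-c', mo', hmo', by simp⟩
  obtain rfl : mo = mo' := Finsupp.ext fun l => by have := hmo l; have := hmo' l; omega
  exact .inr ⟨c - c', mo, hmo, by rw [map_sub]⟩

theorem mul (hp : IsHomogeneousOfDeg p e) (hq : IsHomogeneousOfDeg q e') :
    IsHomogeneousOfDeg (p * q) (e + e') := by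
  rcases hp with rfl | ⟨c, mo, hmo, rfl⟩
  · simp [IsHomogeneousOfDeg]
  rcases hq with rfl | ⟨c', mo', hmo', rfl⟩
  · simp [IsHomogeneousOfDeg]
  exact .inr ⟨c * c', mo + mo', fun l => by simp [hmo, hmo'], by rw [monomial_mul]⟩

theorem nonneg (hp : IsHomogeneousOfDeg p e) (h : p ≠ 0) : 0 ≤ e := by
  obtain ⟨c, mo, hmo, -⟩ := hp.resolve_left h
  exact fun l => hmo l ▸ Int.natCast_nonneg _

theorem eq_zero_of_constantCoeff_ne_zero (hp : IsHomogeneousOfDeg p e)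
    (h : constantCoeff p ≠ 0) : e = 0 := by
  obtain ⟨c, mo, hmo, rfl⟩ := hp.resolve_left (by rintro rfl; simp at h)
  obtain rfl : mo = 0 := by
    by_contra hmo0
    simp [constantCoeff_monomial, hmo0] at h
  exact funext fun l => by simp [← hmo l]

theorem eq_C_constantCoeff (hp : IsHomogeneousOfDeg p 0) : p = C (constantCoeff p) := by
  rcases hp with rfl | ⟨c, mo, hmo, rfl⟩
  · simp
  obtain rfl : mo = 0 := Finsupp.ext fun l => by simpa using hmo l
  simp [← C_apply]

end IsHomogeneousOfDeg

section Homogeneous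

variable {k : Type*} [Field k] {d : ℕ} {F ι : Type*} [AddCommGroup F]
  [Module (MvPolynomial (Fin d) k) F] (b : Module.Basis ι (MvPolynomial (Fin d) k) F)
  {deg : ι → Fin d → ℤ} {δ : F →ₗ[MvPolynomial (Fin d) k] F} {dd : Fin d → ℤ}

theorem apply_basis_eq_zero_of_minimal (hdd : dd ≤ 0)
    (hgr : ∀ i j, IsHomogeneousOfDeg (b.repr (δ (b j)) i) (deg j + dd - deg i))
    (hconst : ∀ i j, constantCoeff (b.repr (δ (b j)) i) = 0) {j : ι}
    (hj : ∀ i, deg i ≤ deg j → deg j ≤ deg i) : δ (b j) = 0 := by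
  refine b.repr.map_eq_zero_iff.1 (Finsupp.ext fun i => ?_)
  by_contra hne
  have hpos := (hgr i j).nonneg hne
  have hle : deg j + dd ≤ deg j := add_le_of_nonpos_right hdd
  have hji := hj i ((sub_nonneg.1 hpos).trans hle)
  have hzero : deg j + dd - deg i = 0 :=
    le_antisymm ((sub_le_sub_right hle _).trans (sub_nonpos.2 hji)) hpos
  have hC := IsHomogeneousOfDeg.eq_C_constantCoeff (hzero ▸ hgr i j)
  exact hne (by rw [hC, hconst, C_0]; rfl)

theorem exists_homogeneous_cycle [Finite ι] [Nonempty ι] (hsq : δ ∘ₗ δ = 0) (hdd : dd ≤ 0)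
    (hgr : ∀ i j, IsHomogeneousOfDeg (b.repr (δ (b j)) i) (deg j + dd - deg i)) :
    ∃ (v : F) (i₀ : ι) (c : k), δ v = 0 ∧ c ≠ 0 ∧ b.repr v i₀ = C c ∧
      ∀ i, IsHomogeneousOfDeg (b.repr v i) (deg i₀ - deg i) := by
  classical
  by_cases hconst : ∀ i j, constantCoeff (b.repr (δ (b j)) i) = 0
  · obtain ⟨j, -, hj⟩ := Set.finite_univ.exists_minimalFor deg Set.univ Set.univ_nonempty
    refine ⟨b j, j, 1, apply_basis_eq_zero_of_minimal b hdd hgr hconst fun i => hj trivial,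
      one_ne_zero, by simp, fun i => ?_⟩
    rcases eq_or_ne i j with rfl | hij
    · simpa using isHomogeneousOfDeg_C (1 : k)
    · exact .inl (by simp [hij.symm])
  · push Not at hconst
    obtain ⟨i₀, j, hc⟩ := hconst
    have hdeg : deg i₀ = deg j + dd :=
      (sub_eq_zero.1 ((hgr i₀ j).eq_zero_of_constantCoeff_ne_zero hc)).symm
    refine ⟨δ (b j), i₀, _, by simpa using congrArg (· (b j)) hsq, hc,
      IsHomogeneousOfDeg.eq_C_constantCoeff (sub_eq_zero.2 hdeg.symm ▸ hgr i₀ j), fun i => ?_⟩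
    rw [hdeg]
    exact hgr i j

end Homogeneous

theorem hasFreeFlag_of_isHomogeneousOfDeg {k : Type*} [Field k] {d : ℕ} {F ι : Type*}
    [AddCommGroup F] [Module (MvPolynomial (Fin d) k) F] [Fintype ι]
    (b : Module.Basis ι (MvPolynomial (Fin d) k) F) (deg : ι → Fin d → ℤ)
    (δ : F →ₗ[MvPolynomial (Fin d) k] F) (hsq : δ ∘ₗ δ = 0) {dd : Fin d → ℤ} (hdd : dd ≤ 0)
    (hgr : ∀ i j, IsHomogeneousOfDeg (b.repr (δ (b j)) i) (deg j + dd - deg i)) :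
    HasFreeFlag δ := by
  obtain ⟨n, hn⟩ : ∃ n, Fintype.card ι = n := ⟨_, rfl⟩
  induction n generalizing F ι with
  | zero =>
    have : IsEmpty ι := Fintype.card_eq_zero_iff.1 hn
    have : Subsingleton F := b.repr.toEquiv.subsingleton
    exact hasFreeFlag_of_subsingleton δ
  | succ n ih =>
    classical
    have : Nonempty ι := Fintype.card_pos_iff.1 (hn ▸ n.succ_pos)
    obtain ⟨v, i₀, c, hv, hc, hvi₀, hvhom⟩ := exists_homogeneous_cycle b hsq hdd hgr
    have hu : C c⁻¹ * b.repr v i₀ = 1 := by rw [hvi₀, ← C_mul, inv_mul_cancel₀ hc, C_1]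
    let K := Submodule.span (MvPolynomial (Fin d) k) {v}
    let δK := K.mapQ K δ (((Submodule.span_singleton_le_iff_mem _ _).2 hv).trans
      (ker_le_comap δ))
    have hsqK : δK ∘ₗ δK = 0 := by
      rw [← Submodule.mapQ_comp]
      simp [hsq]
    have hgrK : ∀ i j, IsHomogeneousOfDeg
        ((b.quotSpanSingleton hu).repr (δK (b.quotSpanSingleton hu j)) i)
        (deg j + dd - deg i) := by
      intro i j
      rw [Module.Basis.quotSpanSingleton_apply, Submodule.mapQ_apply,
        Module.Basis.quotSpanSingleton_repr_mk]
      refine (hgr i j).sub ?_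
      convert ((isHomogeneousOfDeg_C c⁻¹).mul (hgr i₀ j)).mul (hvhom i) using 1
      abel
    refine HasFreeFlag.of_quotient_span_singleton b hu hv (Submodule.mapQ_mkQ _ _ _).symm
      (ih (b.quotSpanSingleton hu) (deg ∘ Subtype.val) δK hsqK hgrK ?_)
    simp [Fintype.card_subtype_compl, hn]

/-- Let `R = k[x₁,…,x_d]` be ℤᵈ-graded and `F` a finitely generated ℤᵈ-graded free `R`-module
(homogeneous basis `b`, degrees `deg`) with a graded square-zero differential `δ` of degree
`dd ≤ 0` coordinatewise. Then `F` admits a free flag: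
a filtration `0 = F^{-1} ⊆ F^0 ⊆ F^1 ⊆ ⋯` with `δ(F^n) ⊆ F^{n-1}`, `∪ F^n = F`, and all
subquotients `F^n/F^{n-1}` free. -/
theorem free_flag_of_nonpos_degree
    (k : Type*) [Field k] (d : ℕ)
    (F : Type*) [AddCommGroup F] [Module (MvPolynomial (Fin d) k) F]
    (ι : Type*) [Fintype ι]
    (b : Module.Basis ι (MvPolynomial (Fin d) k) F)
    (deg : ι → Fin d → ℤ)
    (δ : F →ₗ[MvPolynomial (Fin d) k] F) (hsq : δ ∘ₗ δ = 0)
    (dd : Fin d → ℤ) (hdd : ∀ l, dd l ≤ 0)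
    -- δ is homogeneous of degree dd with respect to the grading determined by `deg`
    (hgr : ∀ i j, IsHomogeneousOfDeg (b.repr (δ (b j)) i)
      (fun l => deg j l + dd l - deg i l)) :
    ∃ Fl : ℕ → Submodule (MvPolynomial (Fin d) k) F,
      Monotone Fl ∧
      Submodule.map δ (Fl 0) = ⊥ ∧
      (∀ n, Submodule.map δ (Fl (n+1)) ≤ Fl n) ∧
      (⨆ n, Fl n) = ⊤ ∧
      Module.Free (MvPolynomial (Fin d) k) (Fl 0) ∧
      ∀ n, Module.Free (MvPolynomial (Fin d) k)
        ((Fl (n+1)) ⧸ (Submodule.comap (Fl (n+1)).subtype (Fl n))) :=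
  hasFreeFlag_of_isHomogeneousOfDeg b deg δ hsq hdd hgr
end

section
/- Let R = k[x₁,…,x_d] be the ℤᵈ-graded polynomial ring over a field k, and F a finitely generated ℤᵈ-graded R-module which is free over R, equipped with a square-zero R-linear endomorphism δ homogeneous of degree 0 ∈ ℤᵈ. If H(F) = ker δ / im δ is nonzero and of finite length as an R-module, then rank_R F ≥ 2^d. -/
set_option synthInstance.maxHeartbeats 1000000

open LinearMap MvPolynomial

/-!
Because `δ` has degree `0`, it acts on each graded piece `F_e`, with `k`-basis
`x ^ (e - deg i) • b i` for `deg i ≤ e`, by the compression of one scalar matrix `C` to these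
indices, and `C i j ≠ 0` only if `deg i ≤ deg j`. Bounding only some coordinates of the degree
gives a complex that is exact when `H(F)` has finite length: the shifts of a cycle along a free
coordinate give a descending chain of submodules of `H(F)`, which stabilises. Bounding all
coordinates gives a non-exact complex in some degree, since `H(F) ≠ 0`. Splitting the basis along
one coordinate into a subcomplex and its quotient, the long exact homology sequence passes this
pattern to both halves with one coordinate fewer, so by induction each half has at least
`2 ^ (d - 1)` elements.
-/

open Finset Function

namespace Matrix

variable {k ι : Type*} [Ring k] [DecidableEq ι]

def compress (C : Matrix ι ι k) (S : Finset ι) (v : ι → k) : ι → k :=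
  fun i => if i ∈ S then ∑ j ∈ S, C i j * v j else 0

def IsExactOn (C : Matrix ι ι k) (S : Finset ι) : Prop :=
  ∀ v : ι → k, (∀ i ∉ S, v i = 0) → C.compress S v = 0 → ∃ w, C.compress S w = v

variable {C : Matrix ι ι k} {S U : Finset ι}

lemma compress_apply_of_notMem (v : ι → k) {i : ι} (hi : i ∉ S) : C.compress S v i = 0 :=
  if_neg hi

lemma compress_congr {v w : ι → k} (h : ∀ j ∈ S, v j = w j) :
    C.compress S v = C.compress S w := by
  funext i
  unfold compress
  split_ifs
  · exact sum_congr rfl fun j hj => by rw [h j hj]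
  · rfl

lemma compress_sub (v w : ι → k) :
    C.compress S (v - w) = C.compress S v - C.compress S w := by
  funext i
  simp only [compress, Pi.sub_apply, mul_sub, sum_sub_distrib]
  split_ifs <;> simp

lemma compress_compress [Fintype ι] (hsq : C * C = 0)
    (hS : ∀ i ∈ S, ∀ j ∈ S, ∀ p, C i p ≠ 0 → C p j ≠ 0 → p ∈ S) (v : ι → k) :
    C.compress S (C.compress S v) = 0 := by
  funext i
  by_cases hi : i ∈ S
  swap
  · exact compress_apply_of_notMem _ hi
  have hpath : ∀ j ∈ S, ∑ p ∈ S, C i p * C p j = 0 := by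
    intro j hj
    have hij : (C * C) i j = 0 := by rw [hsq, zero_apply]
    rw [mul_apply] at hij
    rw [← hij]
    refine sum_subset (subset_univ S) fun p _ hp => ?_
    by_contra h
    exact hp (hS i hi j hj p (left_ne_zero_of_mul h) (right_ne_zero_of_mul h))
  calc C.compress S (C.compress S v) i = ∑ p ∈ S, C i p * ∑ j ∈ S, C p j * v j := by
        simp only [compress, if_pos hi]
        exact sum_congr rfl fun p hp => by rw [if_pos hp]
    _ = ∑ j ∈ S, (∑ p ∈ S, C i p * C p j) * v j := by
        simp only [mul_sum, sum_mul, mul_assoc]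
        exact sum_comm
    _ = 0 := sum_eq_zero fun j hj => by rw [hpath j hj, zero_mul]

lemma mulVec_eq_compress [Fintype ι] (hS : ∀ i j, C i j ≠ 0 → j ∈ S → i ∈ S) {w : ι → k}
    (hw : ∀ j ∉ S, w j = 0) : C *ᵥ w = C.compress S w := by
  funext i
  rw [mulVec, dotProduct, compress]
  split_ifs with hi
  · exact (sum_subset (subset_univ S) fun j _ hj => by rw [hw j hj, mul_zero]).symm
  · refine sum_eq_zero fun j _ => ?_
    by_cases hj : j ∈ S
    · rw [not_ne_iff.1 fun h => hi (hS i j h hj), zero_mul]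
    · rw [hw j hj, mul_zero]

lemma IsExactOn.exists_supported (h : C.IsExactOn S) {v : ι → k} (hv : ∀ i ∉ S, v i = 0)
    (hcyc : C.compress S v = 0) : ∃ w, (∀ i ∉ S, w i = 0) ∧ C.compress S w = v := by
  obtain ⟨w, rfl⟩ := h v hv hcyc
  exact ⟨fun i => if i ∈ S then w i else 0, fun i hi => if_neg hi,
    compress_congr fun j hj => if_pos hj⟩

lemma isExactOn_empty : C.IsExactOn ∅ := fun v hv _ =>
  ⟨0, funext fun i => by rw [compress_apply_of_notMem _ (notMem_empty i), hv i (notMem_empty i)]⟩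

variable {P : ι → Prop} [DecidablePred P]

lemma compress_filter_of_supported (hP : ∀ i j, C i j ≠ 0 → P j → P i) {v : ι → k}
    (hv : ∀ j ∉ U.filter P, v j = 0) : C.compress U v = C.compress (U.filter P) v := by
  funext i
  have hsum : ∑ j ∈ U, C i j * v j = ∑ j ∈ U.filter P, C i j * v j :=
    (sum_subset (filter_subset P U) fun j _ hj => by rw [hv j hj, mul_zero]).symm
  by_cases hiU : i ∈ U
  swap
  · rw [compress_apply_of_notMem v hiU,
      compress_apply_of_notMem v fun h => hiU (mem_filter.1 h).1]
  rw [compress, compress, if_pos hiU, hsum]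
  by_cases hiP : P i
  · rw [if_pos (mem_filter.2 ⟨hiU, hiP⟩)]
  · rw [if_neg fun h => hiP (mem_filter.1 h).2]
    refine sum_eq_zero fun j hj => ?_
    rw [not_ne_iff.1 fun h => hiP (hP i j h (mem_filter.1 hj).2), zero_mul]

lemma compress_filter_not_apply (hP : ∀ i j, C i j ≠ 0 → P j → P i) (w : ι → k) {i : ι}
    (hi : i ∈ U.filter (¬P ·)) : C.compress (U.filter (¬P ·)) w i = C.compress U w i := by
  obtain ⟨hiU, hiP⟩ := mem_filter.1 hi
  rw [compress, compress, if_pos hi, if_pos hiU, sum_filter]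
  refine sum_congr rfl fun j _ => ?_
  split_ifs with hj
  · rw [not_ne_iff.1 fun h => hiP (hP i j h hj), zero_mul]
  · rfl

/- `U.filter P` spans a subcomplex with quotient `U.filter (¬P ·)`; the next two lemmas are
pieces of the long exact homology sequence of this short exact sequence of complexes. -/

theorem isExactOn_filter_not (hU : ∀ v, C.compress U (C.compress U v) = 0)
    (hP : ∀ i j, C i j ≠ 0 → P j → P i) (hexU : C.IsExactOn U)
    (hexL : C.IsExactOn (U.filter P)) : C.IsExactOn (U.filter (¬P ·)) := by
  intro v hv hcyc
  have hsuppL : ∀ i ∉ U.filter P, C.compress U v i = 0 := by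
    intro i hi
    by_cases hiU : i ∈ U
    · have hiH : i ∈ U.filter (¬P ·) := mem_filter.2 ⟨hiU, fun h => hi (mem_filter.2 ⟨hiU, h⟩)⟩
      rw [← compress_filter_not_apply hP v hiH, hcyc, Pi.zero_apply]
    · exact compress_apply_of_notMem v hiU
  have hcycL : C.compress (U.filter P) (C.compress U v) = 0 := by
    rw [← compress_filter_of_supported hP hsuppL, hU]
  obtain ⟨u, huL, hu⟩ := hexL.exists_supported hsuppL hcycL
  have hUu : C.compress U u = C.compress U v := by rw [compress_filter_of_supported hP huL, hu]
  have hsuppU : ∀ i ∉ U, (v - u) i = 0 := fun i hi => by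
    rw [Pi.sub_apply, hv i fun h => hi (mem_filter.1 h).1, huL i fun h => hi (mem_filter.1 h).1,
      sub_zero]
  obtain ⟨w, hw⟩ := hexU (v - u) hsuppU (by rw [compress_sub, hUu, sub_self])
  refine ⟨w, funext fun i => ?_⟩
  by_cases hiH : i ∈ U.filter (¬P ·)
  · rw [compress_filter_not_apply hP w hiH, hw, Pi.sub_apply,
      huL i fun h => (mem_filter.1 hiH).2 (mem_filter.1 h).2, sub_zero]
  · rw [compress_apply_of_notMem w hiH, hv i hiH]

theorem isExactOn_filter (hU : ∀ v, C.compress U (C.compress U v) = 0)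
    (hP : ∀ i j, C i j ≠ 0 → P j → P i) (hexU : C.IsExactOn U)
    (hexH : C.IsExactOn (U.filter (¬P ·))) : C.IsExactOn (U.filter P) := by
  intro v hv hcyc
  obtain ⟨w, hwU, hw⟩ := hexU.exists_supported (fun i hi => hv i fun h => hi (mem_filter.1 h).1)
    (by rw [compress_filter_of_supported hP hv, hcyc])
  have hcycH : C.compress (U.filter (¬P ·)) w = 0 := by
    funext i
    by_cases hiH : i ∈ U.filter (¬P ·)
    · rw [compress_filter_not_apply hP w hiH, hw, Pi.zero_apply]
      exact hv i fun h => (mem_filter.1 hiH).2 (mem_filter.1 h).2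
    · exact compress_apply_of_notMem w hiH
  obtain ⟨u, hu⟩ := hexH (fun i => if i ∈ U.filter (¬P ·) then w i else 0) (fun i hi => if_neg hi)
    (by rw [compress_congr fun j hj => if_pos hj, hcycH])
  have hsupp : ∀ i ∉ U.filter P, (w - C.compress U u) i = 0 := by
    intro i hi
    by_cases hiU : i ∈ U
    · have hiH : i ∈ U.filter (¬P ·) := mem_filter.2 ⟨hiU, fun h => hi (mem_filter.2 ⟨hiU, h⟩)⟩
      rw [Pi.sub_apply, ← compress_filter_not_apply hP u hiH, hu]
      exact sub_eq_zero.2 (if_pos hiH).symm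
    · rw [Pi.sub_apply, hwU i hiU, compress_apply_of_notMem u hiU, sub_zero]
  exact ⟨_, by rw [← compress_filter_of_supported hP hsupp, compress_sub, hU, sub_zero, hw]⟩

end Matrix

lemma Finset.insert_ssubset_insert_of_notMem {γ : Type*} [DecidableEq γ] {a : γ}
    {s t : Finset γ} (ha : a ∉ t) (h : s ⊂ t) : insert a s ⊂ insert a t := by
  obtain ⟨x, hxt, hxs⟩ := exists_of_ssubset h
  refine (ssubset_iff_of_subset (insert_subset_insert a h.subset)).2
    ⟨x, mem_insert_of_mem hxt, ?_⟩
  rw [mem_insert, not_or]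
  exact ⟨ne_of_mem_of_not_mem hxt ha, hxs⟩

section Slices

variable {ι Dir α : Type*} [Preorder α]

def OrdConnectedBy {β : Type*} [Preorder β] (X : ι → β) (A : Finset ι) : Prop :=
  ∀ i ∈ A, ∀ j ∈ A, ∀ p, X i ≤ X p → X p ≤ X j → p ∈ A

variable {X : ι → Dir → α} {A : Finset ι} {D : Finset Dir} {e : Dir → α}

lemma OrdConnectedBy.filter (hA : OrdConnectedBy X A) {P : ι → Prop} [DecidablePred P]
    (hP : ∀ i j p, X i ≤ X p → X p ≤ X j → P i → P j → P p) :
    OrdConnectedBy X (A.filter P) := fun i hi j hj p hip hpj => by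
  rw [mem_filter] at hi hj ⊢
  exact ⟨hA i hi.1 j hj.1 p hip hpj, hP i j p hip hpj hi.2 hj.2⟩

lemma OrdConnectedBy.compress_compress {k : Type*} [Ring k] [Fintype ι] [DecidableEq ι]
    {C : Matrix ι ι k} (hC : ∀ i j, C i j ≠ 0 → X i ≤ X j) (hsq : C * C = 0)
    (hA : OrdConnectedBy X A) (v : ι → k) : C.compress A (C.compress A v) = 0 :=
  Matrix.compress_compress hsq (fun i hi j hj p h₁ h₂ => hA i hi j hj p (hC _ _ h₁) (hC _ _ h₂)) v

variable [DecidableLE α]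

def lowerSlice (X : ι → Dir → α) (A : Finset ι) (D : Finset Dir) (e : Dir → α) : Finset ι :=
  A.filter fun i => ∀ l ∈ D, X i l ≤ e l

@[simp]
lemma lowerSlice_empty : lowerSlice X A ∅ e = A :=
  filter_true_of_mem fun _ _ _ h => absurd h (notMem_empty _)

lemma lowerSlice_filter (P : ι → Prop) [DecidablePred P] :
    lowerSlice X (A.filter P) D e = (lowerSlice X A D e).filter P :=
  filter_comm _ _ _

lemma ordConnectedBy_lowerSlice (hA : OrdConnectedBy X A) :
    OrdConnectedBy X (lowerSlice X A D e) :=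
  hA.filter fun _ _ _ _ hpj _ hj l hl => (hpj l).trans (hj l hl)

variable [DecidableEq Dir]

lemma lowerSlice_insert (l : Dir) :
    lowerSlice X A (insert l D) e = (lowerSlice X A D e).filter (X · l ≤ e l) := by
  ext i
  simp only [lowerSlice, mem_filter, Finset.forall_mem_insert]
  tauto

lemma lowerSlice_insert_update {l : Dir} (hl : l ∉ D) (m : α) :
    lowerSlice X A (insert l D) (update e l m) = (lowerSlice X A D e).filter (X · l ≤ m) := by
  rw [lowerSlice_insert, update_self]
  congr 1
  refine filter_congr fun i _ => forall₂_congr fun l' hl' => ?_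
  rw [update_of_ne (ne_of_mem_of_not_mem hl' hl)]

/- Induction on `D`: cutting `A` along a coordinate `l₀ ∈ D` at the level of a non-exact slice,
the lower part and (by the long exact sequence) the upper part both satisfy the hypotheses for
`D.erase l₀`. -/
theorem two_pow_card_le_card_of_isExactOn_lowerSlice {k : Type*} [Ring k] [Fintype ι]
    [DecidableEq ι] {C : Matrix ι ι k} (hC : ∀ i j, C i j ≠ 0 → X i ≤ X j)
    (hsq : C * C = 0) (D : Finset Dir) {A : Finset ι} (hA : OrdConnectedBy X A)
    (hex : ∀ D' ⊂ D, ∀ e, C.IsExactOn (lowerSlice X A D' e))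
    (hne : ∃ e, ¬ C.IsExactOn (lowerSlice X A D e)) : 2 ^ D.card ≤ A.card := by
  induction D using Finset.induction_on generalizing A with
  | empty =>
    obtain ⟨e, he⟩ := hne
    rw [lowerSlice_empty] at he
    obtain ⟨i, hi⟩ : A.Nonempty := nonempty_iff_ne_empty.2 fun h => he (by
      rw [h]
      exact Matrix.isExactOn_empty)
    simpa using card_pos.2 ⟨i, hi⟩
  | insert l₀ D₀ hl₀ ih =>
    obtain ⟨e₀, hne⟩ := hne
    have hP : ∀ i j, C i j ≠ 0 → X j l₀ ≤ e₀ l₀ → X i l₀ ≤ e₀ l₀ :=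
      fun i j h hj => (hC i j h l₀).trans hj
    have hsqA : ∀ D' e v,
        C.compress (lowerSlice X A D' e) (C.compress (lowerSlice X A D' e) v) = 0 :=
      fun _ _ => (ordConnectedBy_lowerSlice hA).compress_compress hC hsq
    have hexLow : ∀ D' ⊂ D₀, ∀ e,
        C.IsExactOn ((lowerSlice X A D' e).filter (X · l₀ ≤ e₀ l₀)) := by
      intro D' hD' e
      rw [← lowerSlice_insert_update fun h => hl₀ (hD'.subset h)]
      exact hex _ (insert_ssubset_insert_of_notMem hl₀ hD') _
    have hlow : 2 ^ D₀.card ≤ (A.filter (X · l₀ ≤ e₀ l₀)).card := by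
      refine ih (hA.filter fun _ _ _ _ hpj _ hj => (hpj l₀).trans hj) (fun D' hD' e => ?_)
        ⟨e₀, by rwa [lowerSlice_filter, ← lowerSlice_insert]⟩
      rw [lowerSlice_filter]
      exact hexLow D' hD' e
    have hhigh : 2 ^ D₀.card ≤ (A.filter (¬X · l₀ ≤ e₀ l₀)).card := by
      refine ih (hA.filter fun _ _ _ hip _ hi _ hp => hi ((hip l₀).trans hp))
        (fun D' hD' e => ?_) ⟨e₀, fun h => hne ?_⟩
      · rw [lowerSlice_filter]
        exact Matrix.isExactOn_filter_not (hsqA D' e) hP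
          (hex D' (hD'.trans_subset (subset_insert _ _)) e) (hexLow D' hD' e)
      · rw [lowerSlice_filter] at h
        rw [lowerSlice_insert]
        exact Matrix.isExactOn_filter (hsqA D₀ e₀) hP (hex D₀ (ssubset_insert hl₀) e₀) h
    calc 2 ^ (insert l₀ D₀).card = 2 ^ D₀.card + 2 ^ D₀.card := by
          rw [card_insert_of_notMem hl₀, pow_succ, mul_two]
      _ ≤ (A.filter (X · l₀ ≤ e₀ l₀)).card + (A.filter (¬X · l₀ ≤ e₀ l₀)).card :=
          add_le_add hlow hhigh
      _ = A.card := card_filter_add_card_filter_not _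

end Slices

theorem exists_sub_linearCombination_mem_range {R M : Type*} [CommRing R] [AddCommGroup M]
    [Module R M] {δ : M →ₗ[R] M} [IsArtinian R (dHomology δ)] (z : ℕ → M)
    (hz : ∀ t, δ (z t) = 0) :
    ∃ u, ∃ f ∈ Finsupp.supported R R (Set.Ioi u),
      z u - Finsupp.linearCombination R z f ∈ LinearMap.range δ := by
  let zK : ℕ → LinearMap.ker δ := fun t => ⟨z t, hz t⟩
  let π := ((LinearMap.range δ).comap (LinearMap.ker δ).subtype).mkQ
  let N : ℕ →o (Submodule R (dHomology δ))ᵒᵈ :=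
    ⟨fun t => Submodule.span R ((π ∘ zK) '' Set.Ioi t),
      fun _ _ hst => Submodule.span_mono (Set.image_mono (Set.Ioi_subset_Ioi hst))⟩
  obtain ⟨u, hu⟩ := IsArtinian.monotone_stabilizes N
  have hmem : π (zK (u + 1)) ∈ Submodule.span R ((π ∘ zK) '' Set.Ioi (u + 1)) := by
    have hstab : Submodule.span R ((π ∘ zK) '' Set.Ioi u) =
        Submodule.span R ((π ∘ zK) '' Set.Ioi (u + 1)) :=
      hu (u + 1) u.le_succ
    rw [← hstab]
    exact Submodule.subset_span ⟨u + 1, Set.mem_Ioi.2 u.lt_succ_self, rfl⟩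
  obtain ⟨f, hf, hfu⟩ := (Finsupp.mem_span_image_iff_linearCombination R).1 hmem
  refine ⟨u + 1, f, hf, ?_⟩
  have hker : zK (u + 1) - Finsupp.linearCombination R zK f ∈
      (LinearMap.range δ).comap (LinearMap.ker δ).subtype := by
    rw [← Submodule.Quotient.mk_eq_zero, ← Submodule.mkQ_apply, map_sub,
      Finsupp.apply_linearCombination, hfu, sub_self]
  have hcoe : (Finsupp.linearCombination R zK f : M) = Finsupp.linearCombination R z f :=
    Finsupp.apply_linearCombination R (LinearMap.ker δ).subtype zK f
  simpa [hcoe] using hker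

noncomputable section GradedFree

variable {σ : Type*}

def toExponent [Finite σ] (u : σ → ℤ) : σ →₀ ℕ :=
  Finsupp.equivFunOnFinite.symm fun l => (u l).toNat

@[simp]
lemma toExponent_apply [Finite σ] (u : σ → ℤ) (l : σ) : toExponent u l = (u l).toNat :=
  rfl

lemma toExponent_add [Finite σ] {u v : σ → ℤ} (hu : 0 ≤ u) (hv : 0 ≤ v) :
    toExponent (u + v) = toExponent u + toExponent v := by
  ext l
  simp [Int.toNat_add (hu l) (hv l)]

variable [Fintype σ] {k : Type*} [CommRing k] {F : Type*} [AddCommGroup F]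
  [Module (MvPolynomial σ k) F] {ι : Type*} [Fintype ι]
  (b : Module.Basis ι (MvPolynomial σ k) F) (deg : ι → σ → ℤ)

def degLE (deg : ι → σ → ℤ) (e : σ → ℤ) : Finset ι :=
  univ.filter fun i => ∀ l, deg i l ≤ e l

def ofComponent (e : σ → ℤ) (v : ι → k) : F :=
  ∑ i ∈ degLE deg e, monomial (toExponent (e - deg i)) (v i) • b i

variable {b deg}

@[simp]
lemma mem_degLE {e : σ → ℤ} {i : ι} : i ∈ degLE deg e ↔ deg i ≤ e := by
  simp [degLE, Pi.le_def]

lemma lowerSlice_univ_eq_degLE {D : Finset σ} {e e' : σ → ℤ}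
    (he : ∀ l ∈ D, e' l = e l) (hbig : ∀ i, ∀ l ∉ D, deg i l ≤ e' l) :
    lowerSlice deg univ D e = degLE deg e' := by
  classical
  ext i
  simp only [lowerSlice, degLE, mem_filter, mem_univ, true_and]
  exact ⟨fun h l => if hl : l ∈ D then (he l hl).symm ▸ h l hl else hbig i l hl,
    fun h l hl => he l hl ▸ h l⟩

@[simp]
lemma ofComponent_zero (e : σ → ℤ) : ofComponent b deg e (0 : ι → k) = 0 := by
  simp [ofComponent]

variable [DecidableEq ι]

variable (b deg) in
/-- The coordinates of the degree-`e` part of `x` in the `k`-basis `x ^ (e - deg i) • b i`,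
`deg i ≤ e`, of `F_e`. -/
def component (e : σ → ℤ) : F →+ (ι → k) where
  toFun x i := if i ∈ degLE deg e then coeff (toExponent (e - deg i)) (b.repr x i) else 0
  map_zero' := by
    funext i
    simp
  map_add' x y := by
    funext i
    simp only [map_add, Finsupp.add_apply, coeff_add, Pi.add_apply]
    split_ifs <;> simp

lemma component_apply (e : σ → ℤ) (x : F) (i : ι) :
    component b deg e x i =
      if i ∈ degLE deg e then coeff (toExponent (e - deg i)) (b.repr x i) else 0 :=
  rfl

lemma component_apply_of_notMem {e : σ → ℤ} (x : F) {i : ι} (hi : i ∉ degLE deg e) :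
    component b deg e x i = 0 :=
  if_neg hi

lemma coeff_repr_eq_component (x : F) (i : ι) (c : σ →₀ ℕ) :
    coeff c (b.repr x i) = component b deg (deg i + fun l => (c l : ℤ)) x i := by
  rw [component_apply, if_pos (mem_degLE.2 fun l => by simp), add_sub_cancel_left]
  congr
  ext l
  simp

lemma eq_zero_of_forall_component_eq_zero {x : F} (h : ∀ e, component b deg e x = 0) :
    x = 0 := by
  rw [← b.repr.map_eq_zero_iff]
  ext i c
  rw [coeff_repr_eq_component, h]
  simp

lemma finite_setOf_component_ne_zero (x : F) : {e | component b deg e x ≠ 0}.Finite := by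
  refine (Set.finite_iUnion fun i => ((b.repr x i).support.finite_toSet.image
    fun c l => deg i l + c l)).subset fun e he => ?_
  obtain ⟨i, hi⟩ := Function.ne_iff.1 he
  have hie : i ∈ degLE deg e := by
    by_contra h
    exact hi (component_apply_of_notMem x h)
  rw [component_apply, if_pos hie] at hi
  refine Set.mem_iUnion.2 ⟨i, toExponent (e - deg i), by simpa using hi, funext fun l => ?_⟩
  have : deg i l ≤ e l := mem_degLE.1 hie l
  simp only [toExponent_apply, Pi.sub_apply]
  omega

lemma repr_ofComponent (e : σ → ℤ) (v : ι → k) (i : ι) :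
    b.repr (ofComponent b deg e v) i =
      if i ∈ degLE deg e then monomial (toExponent (e - deg i)) (v i) else 0 := by
  simp [ofComponent, Finsupp.single_apply]

lemma component_ofComponent_self {e : σ → ℤ} {v : ι → k}
    (hv : ∀ i ∉ degLE deg e, v i = 0) : component b deg e (ofComponent b deg e v) = v := by
  classical
  funext i
  rw [component_apply, repr_ofComponent]
  split_ifs with hi
  · simp
  · exact (hv i hi).symm

lemma component_ofComponent_of_ne {e e' : σ → ℤ} (h : e' ≠ e) (v : ι → k) :
    component b deg e' (ofComponent b deg e v) = 0 := by
  classical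
  funext i
  rw [component_apply, repr_ofComponent]
  split_ifs with hi' hi
  · rw [coeff_monomial, if_neg]
    · rfl
    refine fun heq => h (funext fun l => ?_)
    have h₁ := DFunLike.congr_fun heq l
    have h₂ : deg i l ≤ e l := mem_degLE.1 hi l
    have h₃ : deg i l ≤ e' l := mem_degLE.1 hi' l
    simp only [toExponent_apply, Pi.sub_apply] at h₁
    omega
  · simp
  · rfl

lemma sum_ofComponent_component {x : F} {E : Finset (σ → ℤ)}
    (hE : ∀ e, component b deg e x ≠ 0 → e ∈ E) :
    ∑ e ∈ E, ofComponent b deg e (component b deg e x) = x := by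
  rw [← sub_eq_zero]
  refine eq_zero_of_forall_component_eq_zero (b := b) (deg := deg) fun e' => ?_
  have hself : component b deg e' (ofComponent b deg e' (component b deg e' x)) =
      component b deg e' x :=
    component_ofComponent_self (e := e') fun i hi => component_apply_of_notMem x hi
  rw [map_sub, map_sum, sub_eq_zero, sum_eq_single e'
      (fun e _ he => component_ofComponent_of_ne (Ne.symm he) _)
      fun he' => by rw [hself]; exact not_ne_iff.1 (mt (hE e') he'), hself]

lemma component_smul_eq_zero {e : σ → ℤ} (p : MvPolynomial σ k) {x : F}
    (hx : ∀ e' ≤ e, component b deg e' x = 0) : component b deg e (p • x) = 0 := by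
  classical
  funext i
  rw [component_apply]
  split_ifs with hi
  · rw [map_smul, Finsupp.smul_apply, smul_eq_mul, coeff_mul]
    refine sum_eq_zero fun c hc => ?_
    rw [coeff_repr_eq_component, hx, Pi.zero_apply, mul_zero]
    intro l
    have h₁ := DFunLike.congr_fun (Finset.HasAntidiagonal.mem_antidiagonal.1 hc) l
    have h₂ : deg i l ≤ e l := mem_degLE.1 hi l
    simp only [Finsupp.add_apply, toExponent_apply, Pi.sub_apply] at h₁
    show deg i l + (c.2 l : ℤ) ≤ e l
    omega
  · rfl

variable (b deg) in
/-- `δ (b j) = ∑ i, coeffMatrix b deg δ i j • x ^ (deg j - deg i) • b i` when `δ` has degree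
`0`. -/
def coeffMatrix (δ : F →ₗ[MvPolynomial σ k] F) : Matrix ι ι k :=
  fun i j => component b deg (deg j) (δ (b j)) i

variable {δ : F →ₗ[MvPolynomial σ k] F}

lemma le_of_coeffMatrix_ne_zero {i j : ι} (h : coeffMatrix b deg δ i j ≠ 0) : deg i ≤ deg j :=
  mem_degLE.1 (not_not.1 fun hi => h (component_apply_of_notMem _ hi))

lemma mem_degLE_of_coeffMatrix_ne_zero {e : σ → ℤ} {i j : ι}
    (h : coeffMatrix b deg δ i j ≠ 0) (hj : j ∈ degLE deg e) : i ∈ degLE deg e :=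
  mem_degLE.2 ((le_of_coeffMatrix_ne_zero h).trans (mem_degLE.1 hj))

end GradedFree

noncomputable section DegreeZeroDifferential

variable {k : Type*} [Field k] {d : ℕ} {F : Type*} [AddCommGroup F]
  [Module (MvPolynomial (Fin d) k) F] {ι : Type*} [Fintype ι] [DecidableEq ι]
  {b : Module.Basis ι (MvPolynomial (Fin d) k) F} {deg : ι → Fin d → ℤ}
  {δ : F →ₗ[MvPolynomial (Fin d) k] F}

variable (b deg) in
def HasDegreeZero (δ : F →ₗ[MvPolynomial (Fin d) k] F) : Prop :=
  ∀ i j, IsHomogeneousOfDeg (b.repr (δ (b j)) i) (fun l => deg j l - deg i l)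

lemma HasDegreeZero.repr_apply_basis (hδ : HasDegreeZero b deg δ) (i j : ι) :
    b.repr (δ (b j)) i = monomial (toExponent (deg j - deg i)) (coeffMatrix b deg δ i j) := by
  rcases hδ i j with h0 | ⟨c, mo, hmo, hp⟩
  · rw [h0, coeffMatrix, component_apply, h0]
    simp
  · have hmo' : ∀ l, (mo l : ℤ) = deg j l - deg i l := hmo
    have hle : deg i ≤ deg j := fun l => show deg i l ≤ deg j l by have := hmo' l; omega
    have hexp : toExponent (deg j - deg i) = mo := by
      ext l
      have := hmo' l
      simp only [toExponent_apply, Pi.sub_apply]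
      omega
    rw [coeffMatrix, component_apply, if_pos (mem_degLE.2 hle), hp, hexp, coeff_monomial,
      if_pos rfl]

lemma HasDegreeZero.map_ofComponent (hδ : HasDegreeZero b deg δ) (e : Fin d → ℤ) (v : ι → k) :
    δ (ofComponent b deg e v) =
      ofComponent b deg e ((coeffMatrix b deg δ).compress (degLE deg e) v) := by
  apply b.repr.injective
  ext i : 1
  have hterm : ∀ j ∈ degLE deg e,
      monomial (toExponent (e - deg j)) (v j) * b.repr (δ (b j)) i =
        if i ∈ degLE deg e then
          monomial (toExponent (e - deg i)) (coeffMatrix b deg δ i j * v j) else 0 := by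
    intro j hj
    rw [hδ.repr_apply_basis]
    by_cases hC : coeffMatrix b deg δ i j = 0
    · simp [hC]
    have hij := le_of_coeffMatrix_ne_zero hC
    have hje := mem_degLE.1 hj
    rw [if_pos (mem_degLE.2 (hij.trans hje)), monomial_mul,
      ← toExponent_add (sub_nonneg.2 hje) (sub_nonneg.2 hij), sub_add_sub_cancel, mul_comm (v j)]
  rw [repr_ofComponent]
  simp only [ofComponent, map_sum, map_smul, Finsupp.coe_finsetSum, Finset.sum_apply,
    Finsupp.smul_apply, smul_eq_mul]
  rw [sum_congr rfl hterm]
  split_ifs with hi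
  · rw [Matrix.compress, if_pos hi, map_sum]
  · exact sum_const_zero

lemma HasDegreeZero.component_map (hδ : HasDegreeZero b deg δ) (e : Fin d → ℤ) (x : F) :
    component b deg e (δ x) =
      (coeffMatrix b deg δ).compress (degLE deg e) (component b deg e x) := by
  set E := insert e (finite_setOf_component_ne_zero (b := b) (deg := deg) x).toFinset
  conv_lhs => rw [← sum_ofComponent_component (E := E) fun e' h =>
    mem_insert_of_mem ((Set.Finite.mem_toFinset _).2 h)]
  rw [map_sum, map_sum, sum_eq_single_of_mem e (mem_insert_self e _) fun e' _ he' => by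
      rw [hδ.map_ofComponent, component_ofComponent_of_ne (Ne.symm he')],
    hδ.map_ofComponent, component_ofComponent_self fun i hi => Matrix.compress_apply_of_notMem _ hi]

theorem HasDegreeZero.coeffMatrix_mul_self (hδ : HasDegreeZero b deg δ) (hsq : δ ∘ₗ δ = 0) :
    coeffMatrix b deg δ * coeffMatrix b deg δ = 0 := by
  ext i j
  -- the `j`-th column of the matrix is the degree-`deg j` part of `δ (b j)`
  show (coeffMatrix b deg δ).mulVec (component b deg (deg j) (δ (b j))) i = 0
  rw [Matrix.mulVec_eq_compress (fun _ _ h => mem_degLE_of_coeffMatrix_ne_zero h)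
    fun _ hj => component_apply_of_notMem _ hj, ← hδ.component_map, ← LinearMap.comp_apply, hsq,
    LinearMap.zero_apply, map_zero, Pi.zero_apply]

theorem HasDegreeZero.mem_range_of_forall_isExactOn (hδ : HasDegreeZero b deg δ)
    (hex : ∀ e, (coeffMatrix b deg δ).IsExactOn (degLE deg e)) {x : F} (hx : δ x = 0) :
    x ∈ range δ := by
  choose w hw using fun e => hex e _ (fun i hi => component_apply_of_notMem x hi)
    (by rw [← hδ.component_map, hx, map_zero])
  refine ⟨∑ e ∈ (finite_setOf_component_ne_zero (b := b) (deg := deg) x).toFinset,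
    ofComponent b deg e (w e), ?_⟩
  simp only [map_sum, hδ.map_ofComponent, hw]
  exact sum_ofComponent_component fun e he => (Set.Finite.mem_toFinset _).2 he

theorem HasDegreeZero.isExactOn_lowerSlice_of_ssubset (hδ : HasDegreeZero b deg δ)
    (hfl : IsFiniteLength (MvPolynomial (Fin d) k) (dHomology δ)) {D : Finset (Fin d)}
    (hD : D ⊂ univ) (e : Fin d → ℤ) :
    (coeffMatrix b deg δ).IsExactOn (lowerSlice deg univ D e) := by
  have := (isFiniteLength_iff_isNoetherian_isArtinian.1 hfl).2
  intro v hv hcyc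
  obtain ⟨l₀, -, hl₀⟩ := exists_of_ssubset hD
  obtain ⟨B, hB⟩ := Finite.exists_le fun p : ι × Fin d => deg p.1 p.2
  -- pushing the free coordinates past all basis degrees does not change the slice
  let e' : ℕ → Fin d → ℤ := fun t l => if l ∈ D then e l else B + t
  have hslice : ∀ t, lowerSlice deg univ D e = degLE deg (e' t) := fun t =>
    lowerSlice_univ_eq_degLE (fun l hl => if_pos hl) fun i l hl => by
      have : deg i l ≤ B := hB (i, l)
      simp only [e', if_neg hl]
      omega
  -- The shifts of `v` to the degrees `e' t` are cycles; a relation between their homology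
  -- classes, read in degree `e' u`, exhibits `v` as a boundary.
  obtain ⟨u, f, hf, w, hw⟩ := exists_sub_linearCombination_mem_range
    (fun t => ofComponent b deg (e' t) v) fun t => by
      rw [hδ.map_ofComponent, ← hslice, hcyc, ofComponent_zero]
  have hlater : component b deg (e' u)
      (Finsupp.linearCombination _ (fun t => ofComponent b deg (e' t) v) f) = 0 := by
    rw [Finsupp.linearCombination_apply, Finsupp.sum, map_sum]
    refine sum_eq_zero fun s hs => component_smul_eq_zero _ fun e'' he'' =>
      component_ofComponent_of_ne (fun h => ?_) v
    have h₁ := he'' l₀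
    have h₂ : u < s := (Finsupp.mem_supported _ _).1 hf hs
    rw [h] at h₁
    simp only [e', if_neg hl₀] at h₁
    omega
  refine ⟨component b deg (e' u) w, ?_⟩
  rw [hslice u, ← hδ.component_map, hw, map_sub, hlater, sub_zero,
    component_ofComponent_self fun i hi => hv i (hslice u ▸ hi)]

end DegreeZeroDifferential

/-- Multigraded Avramov–Buchweitz–Iyengar bound: let `R = k[x₁,…,x_d]` and `F` a finitely
generated ℤᵈ-graded free `R`-module (homogeneous basis `b` with degrees `deg`) with a
square-zero `R`-linear differential `δ`, homogeneous of degree `0 ∈ ℤᵈ`. If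
`H(F) = ker δ / im δ` is nonzero and of finite length as an `R`-module, then
`rank_R F ≥ 2^d`. -/
theorem rank_ge_two_pow_of_finite_length_homology
    (k : Type*) [Field k] (d : ℕ)
    (F : Type*) [AddCommGroup F] [Module (MvPolynomial (Fin d) k) F]
    (ι : Type*) [Fintype ι]
    (b : Module.Basis ι (MvPolynomial (Fin d) k) F)
    (deg : ι → Fin d → ℤ)
    (δ : F →ₗ[MvPolynomial (Fin d) k] F) (hsq : δ ∘ₗ δ = 0)
    -- δ is homogeneous of degree 0 ∈ ℤᵈ
    (hgr : ∀ i j, IsHomogeneousOfDeg (b.repr (δ (b j)) i) (fun l => deg j l - deg i l))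
    -- H(F) is nonzero
    (hH : ∃ x : F, δ x = 0 ∧ x ∉ LinearMap.range δ)
    -- H(F) has finite length
    (hfl : IsFiniteLength (MvPolynomial (Fin d) k) (dHomology δ)) :
    2 ^ d ≤ Module.finrank (MvPolynomial (Fin d) k) F := by
  classical
  have hδ : HasDegreeZero b deg δ := hgr
  have hne : ∃ e, ¬ (coeffMatrix b deg δ).IsExactOn (lowerSlice deg univ univ e) := by
    obtain ⟨x, hx, hxr⟩ := hH
    by_contra! hex
    refine hxr (hδ.mem_range_of_forall_isExactOn (fun e => ?_) hx)
    rw [← lowerSlice_univ_eq_degLE (fun _ _ => rfl) fun _ l hl => absurd (mem_univ l) hl]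
    exact hex e
  have key := two_pow_card_le_card_of_isExactOn_lowerSlice
    (fun _ _ => le_of_coeffMatrix_ne_zero) (hδ.coeffMatrix_mul_self hsq) univ
    (fun _ _ _ _ p _ _ => mem_univ p) (fun D hD e => hδ.isExactOn_lowerSlice_of_ssubset hfl hD e)
    hne
  rwa [card_univ, Fintype.card_fin, card_univ, ← Module.finrank_eq_card_basis b] at key
end
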